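/- arXiv:1604.06933 — 3 statements merged into one kernel-verified Lean document; each statement's English description precedes it below -/
import Mathlib

section
/- Let F : ℤ/N → ℝ be a real-valued vector whose discrete Fourier transform f = DFT(F) is supported on the indices {-τ/2, ..., τ/2} (mod N), with τ even and N > 2τ. If G : ℤ/N → ℝ is another real-valued vector with |G(j)| = |F(j)| for all j and DFT(G) supported on the same index set, then G = F or G = -F. -/
open Finset

/-- The discrete Fourier transform `f(k) = (1/N) ∑_j F(j) e^{2πijk/N}`. -/
noncomputable def dft {N : ℕ} [NeZero N] (F : ZMod N → ℂ) (k : ZMod N) : ℂ :=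
  (N : ℂ)⁻¹ * ∑ j : ZMod N,
    F j * Complex.exp (2 * Real.pi * Complex.I * (j.val : ℂ) * (k.val : ℂ) / N)

/-- Membership in the support set `{-τ/2, ..., τ/2} mod N`. -/
def inSupp (N τ : ℕ) (k : ZMod N) : Prop :=
  ∃ m : ℤ, |m| ≤ (τ : ℤ) / 2 ∧ (m : ZMod N) = k

open Polynomial

/-- The primitive `N`-th root of unity `e^{2πi/N}`. -/
noncomputable def zetaN (N : ℕ) : ℂ := Complex.exp (2 * Real.pi * Complex.I / N)

lemma zetaN_prim (N : ℕ) [NeZero N] : IsPrimitiveRoot (zetaN N) N :=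
  Complex.isPrimitiveRoot_exp N (NeZero.ne N)

lemma zetaN_pow (N : ℕ) [NeZero N] (a b : ℕ) :
    Complex.exp (2 * Real.pi * Complex.I * a * b / N) = zetaN N ^ (a * b) := by
  rw [zetaN, ← Complex.exp_nat_mul]
  congr 1
  push_cast
  ring

lemma zmod_sum_val {N : ℕ} [NeZero N] (g : ℕ → ℂ) :
    ∑ k : ZMod N, g k.val = ∑ i ∈ Finset.range N, g i := by
  obtain ⟨n, rfl⟩ : ∃ n, N = n + 1 := ⟨N - 1, (Nat.succ_pred_eq_of_pos (NeZero.pos N)).symm⟩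
  exact Fin.sum_univ_eq_sum_range g (n+1)

lemma orth {N : ℕ} [NeZero N] {ζ : ℂ} (hζ : IsPrimitiveRoot ζ N) (a : ℤ) :
    ∑ k : ZMod N, ζ ^ (a * (k.val : ℤ)) = if (a : ZMod N) = 0 then (N : ℂ) else 0 := by
  have hz : ζ ≠ 0 := hζ.ne_zero (NeZero.ne N)
  have h1 : ∑ k : ZMod N, ζ ^ (a * (k.val : ℤ)) = ∑ i ∈ Finset.range N, (ζ ^ a) ^ i := by
    rw [← zmod_sum_val (g := fun i => (ζ ^ a) ^ i)]
    refine Finset.sum_congr rfl fun k _ => ?_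
    rw [← zpow_natCast (ζ ^ a) k.val, ← zpow_mul]
  rw [h1]
  by_cases hd : (a : ZMod N) = 0
  · rw [if_pos hd]
    obtain ⟨q, hq⟩ := (ZMod.intCast_zmod_eq_zero_iff_dvd a N).mp hd
    have : ζ ^ a = 1 := by
      rw [hq, zpow_mul, hζ.zpow_eq_one, one_zpow]
    simp [this]
  · rw [if_neg hd]
    have hne : ζ ^ a ≠ 1 := by
      intro h
      exact hd ((ZMod.intCast_zmod_eq_zero_iff_dvd a N).mpr ((hζ.zpow_eq_one_iff_dvd a).mp h))
    have hN1 : (ζ ^ a) ^ N = 1 := by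
      rw [← zpow_natCast, ← zpow_mul, mul_comm, zpow_mul, hζ.zpow_eq_one, one_zpow]
    rw [geom_sum_eq hne, hN1, sub_self, zero_div]

/-- Fourier inversion for `dft`. -/
lemma inversion {N : ℕ} [NeZero N] (H : ZMod N → ℂ) (j : ZMod N) :
    ∑ k : ZMod N, dft H k * (zetaN N) ^ (-((j.val : ℤ)) * (k.val : ℤ)) = H j := by
  have hζ := zetaN_prim N
  have hz : zetaN N ≠ 0 := hζ.ne_zero (NeZero.ne N)
  have hNne : (N : ℂ) ≠ 0 := Nat.cast_ne_zero.mpr (NeZero.ne N)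
  calc ∑ k : ZMod N, dft H k * (zetaN N) ^ (-((j.val : ℤ)) * (k.val : ℤ))
      = (N:ℂ)⁻¹ * ∑ k : ZMod N, ∑ i : ZMod N,
          H i * (zetaN N) ^ (((i.val : ℤ) - (j.val : ℤ)) * (k.val : ℤ)) := by
        rw [Finset.mul_sum]
        refine Finset.sum_congr rfl fun k _ => ?_
        rw [dft, mul_assoc, Finset.sum_mul]
        congr 1
        refine Finset.sum_congr rfl fun i _ => ?_
        rw [zetaN_pow, mul_assoc]
        congr 1
        rw [← zpow_natCast (zetaN N) (i.val * k.val), ← zpow_add₀ hz]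
        congr 1
        push_cast
        ring
    _ = (N:ℂ)⁻¹ * ∑ i : ZMod N,
          H i * ∑ k : ZMod N, (zetaN N) ^ (((i.val : ℤ) - (j.val : ℤ)) * (k.val : ℤ)) := by
        rw [Finset.sum_comm]
        congr 1
        exact Finset.sum_congr rfl fun i _ => (Finset.mul_sum _ _ _).symm
    _ = (N:ℂ)⁻¹ * ∑ i : ZMod N,
          H i * (if i = j then (N:ℂ) else 0) := by
        congr 1
        refine Finset.sum_congr rfl fun i _ => ?_
        rw [orth hζ]
        congr 1
        have : ((((i.val : ℤ) - (j.val : ℤ)) : ℤ) : ZMod N) = i - j := by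
          push_cast
          simp [ZMod.natCast_val, ZMod.cast_id]
        simp only [this, sub_eq_zero]
    _ = H j := by
        have : ∀ i : ZMod N, H i * (if i = j then (N:ℂ) else 0) = if i = j then H i * N else 0 := by
          intro i; split <;> simp
        simp only [this]
        rw [Finset.sum_ite_eq' Finset.univ j (fun i => H i * (N:ℂ))]
        simp [hNne]
        field_simp

/-- The polynomial whose evaluation at `ζ^{-j}` recovers `z^{τ/2} H j`. -/
noncomputable def suppPoly (N τ : ℕ) [NeZero N] (H : ZMod N → ℂ) : Polynomial ℂ :=
  ∑ m ∈ Finset.Icc (-((τ:ℤ)/2)) ((τ:ℤ)/2),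
    C (dft H ((m : ZMod N))) * X ^ (m + (τ:ℤ)/2).toNat

lemma suppPoly_natDegree_le (N τ : ℕ) [NeZero N] (H : ZMod N → ℂ) :
    (suppPoly N τ H).natDegree ≤ τ := by
  refine natDegree_sum_le_of_forall_le _ _ fun m hm => ?_
  refine le_trans (natDegree_C_mul_X_pow_le _ _) ?_
  rw [Finset.mem_Icc] at hm
  rw [Int.toNat_le]
  omega

lemma castInj (N τ : ℕ) [NeZero N] (hτN : (τ:ℤ) < N) :
    Set.InjOn (fun m : ℤ => (m : ZMod N)) (Finset.Icc (-((τ:ℤ)/2)) ((τ:ℤ)/2)) := by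
  intro m₁ h₁ m₂ h₂ h
  simp only [Finset.coe_Icc, Set.mem_Icc] at h₁ h₂
  have hd : (N:ℤ) ∣ m₁ - m₂ := by
    rw [← ZMod.intCast_zmod_eq_zero_iff_dvd]
    push_cast
    simp only at h
    rw [h]
    ring
  have : m₁ - m₂ = 0 := Int.eq_zero_of_abs_lt_dvd hd (by rw [abs_lt]; omega)
  omega

lemma suppPoly_eval {N τ : ℕ} [NeZero N] (hτN : (τ:ℤ) < N) (H : ZMod N → ℂ)
    (hH : ∀ k, ¬ inSupp N τ k → dft H k = 0) (j : ZMod N) :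
    (suppPoly N τ H).eval ((zetaN N) ^ (-(j.val : ℤ)))
      = ((zetaN N) ^ (-(j.val : ℤ))) ^ ((τ:ℤ)/2) * H j := by
  have hζ := zetaN_prim N
  set z : ℂ := (zetaN N) ^ (-(j.val : ℤ)) with hzdef
  have hz : z ≠ 0 := zpow_ne_zero _ (hζ.ne_zero (NeZero.ne N))
  have hzN : z ^ (N : ℤ) = 1 := by
    rw [hzdef, ← zpow_mul, mul_comm, zpow_mul, hζ.zpow_eq_one, one_zpow]
  have key : ∀ m : ℤ, z ^ ((((m : ZMod N)).val : ℤ)) = z ^ m := by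
    intro m
    have hc : (((((m : ZMod N)).val : ℤ) - m : ℤ) : ZMod N) = 0 := by
      push_cast
      simp [ZMod.natCast_val, ZMod.cast_id]
    obtain ⟨q, hq⟩ := (ZMod.intCast_zmod_eq_zero_iff_dvd _ N).mp hc
    have : ((((m : ZMod N)).val : ℤ)) = m + N * q := by omega
    rw [this, zpow_add₀ hz, zpow_mul, hzN, one_zpow, mul_one]
  have step1 : (suppPoly N τ H).eval z
      = z ^ ((τ:ℤ)/2) * ∑ m ∈ Finset.Icc (-((τ:ℤ)/2)) ((τ:ℤ)/2),
          dft H ((m : ZMod N)) * z ^ m := by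
    rw [suppPoly, eval_finset_sum, Finset.mul_sum]
    refine Finset.sum_congr rfl fun m hm => ?_
    rw [Finset.mem_Icc] at hm
    rw [eval_mul, eval_C, eval_pow, eval_X, ← zpow_natCast z ((m + (τ:ℤ)/2).toNat),
      Int.toNat_of_nonneg (by omega), zpow_add₀ hz]
    ring
  rw [step1]
  congr 1
  have hsub : Finset.image (fun m : ℤ => (m : ZMod N)) (Finset.Icc (-((τ:ℤ)/2)) ((τ:ℤ)/2))
       ⊆ Finset.univ := Finset.subset_univ _
  have himg : ∑ k ∈ Finset.image (fun m : ℤ => (m : ZMod N)) (Finset.Icc (-((τ:ℤ)/2)) ((τ:ℤ)/2)),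
        dft H k * z ^ ((k.val : ℤ))
      = ∑ m ∈ Finset.Icc (-((τ:ℤ)/2)) ((τ:ℤ)/2), dft H ((m : ZMod N)) * z ^ m := by
    rw [Finset.sum_image
      (fun m₁ h₁ m₂ h₂ h => castInj N τ hτN (by simpa using h₁) (by simpa using h₂) h)]
    exact Finset.sum_congr rfl fun m _ => by rw [key]
  rw [← himg]
  rw [Finset.sum_subset hsub]
  · rw [← inversion H j]
    refine Finset.sum_congr rfl fun k _ => ?_
    rw [hzdef, ← zpow_mul]
  · intro k _ hk
    have : ¬ inSupp N τ k := by
      intro ⟨m, hm1, hm2⟩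
      exact hk (Finset.mem_image.mpr ⟨m, Finset.mem_Icc.mpr (abs_le.mp hm1), hm2⟩)
    rw [hH k this, zero_mul]

lemma dft_add' {N : ℕ} [NeZero N] (A B : ZMod N → ℂ) (k : ZMod N) :
    dft (fun j => A j + B j) k = dft A k + dft B k := by
  simp only [dft]
  rw [← mul_add, ← Finset.sum_add_distrib]
  congr 1
  exact Finset.sum_congr rfl fun j _ => by ring

theorem sign_problem_uniqueness (N τ : ℕ) [NeZero N] (hτ : Even τ) (hτpos : 0 < τ)
    (hN : 2 * τ < N) (F G : ZMod N → ℝ)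
    (hF : ∀ k : ZMod N, ¬ inSupp N τ k → dft (fun j => (F j : ℂ)) k = 0)
    (hG : ∀ k : ZMod N, ¬ inSupp N τ k → dft (fun j => (G j : ℂ)) k = 0)
    (habs : ∀ j : ZMod N, |G j| = |F j|) :
    G = F ∨ G = -F := by
  have hζ := zetaN_prim N
  have hzne : zetaN N ≠ 0 := hζ.ne_zero (NeZero.ne N)
  have hτN : (τ:ℤ) < N := by exact_mod_cast (by omega : (τ:ℤ) < (N:ℤ))
  set Hp : ZMod N → ℂ := fun j => (F j : ℂ) + G j with hHpdef
  set Hm : ZMod N → ℂ := fun j => (F j : ℂ) + (- G j) with hHmdef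
  have hHp : ∀ k, ¬ inSupp N τ k → dft Hp k = 0 := by
    intro k hk
    rw [hHpdef, dft_add' _ _ k, hF k hk, hG k hk, add_zero]
  have hHm : ∀ k, ¬ inSupp N τ k → dft Hm k = 0 := by
    intro k hk
    rw [hHmdef, dft_add' _ _ k, hF k hk]
    have : dft (fun j => -(G j : ℂ)) k = - dft (fun j => (G j : ℂ)) k := by
      simp [dft, Finset.sum_neg_distrib, neg_mul, Finset.mul_sum]
    rw [this, hG k hk, neg_zero, add_zero]
  -- the product polynomial vanishes at all N-th roots of unity
  have hevals : ∀ j : ZMod N,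
      (suppPoly N τ Hp * suppPoly N τ Hm).eval ((zetaN N) ^ (-(j.val : ℤ))) = 0 := by
    intro j
    rw [eval_mul, suppPoly_eval hτN Hp hHp j, suppPoly_eval hτN Hm hHm j]
    have h2 : (G j : ℝ)^2 = (F j)^2 := by
      rw [← sq_abs (G j), ← sq_abs (F j), habs j]
    have hFG : Hp j * Hm j = 0 := by
      rw [hHpdef, hHmdef]
      have : ((F j : ℂ) + G j) * ((F j : ℂ) + (- G j)) = ((F j ^ 2 - G j ^ 2 : ℝ) : ℂ) := by
        push_cast
        ring
      rw [this, h2]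
      simp
    rw [mul_mul_mul_comm, hFG, mul_zero]
  have hinj : Function.Injective (fun j : ZMod N => (zetaN N) ^ (-(j.val : ℤ))) := by
    intro a b h
    simp only at h
    have h2 : (zetaN N) ^ (a.val) = (zetaN N) ^ (b.val) := by
      have h3 := congrArg (·⁻¹) h
      simp only [← zpow_neg, neg_neg, zpow_natCast] at h3
      exact h3
    exact ZMod.val_injective N (hζ.pow_inj (ZMod.val_lt a) (ZMod.val_lt b) h2)
  have hQ : suppPoly N τ Hp * suppPoly N τ Hm = 0 := by
    apply Polynomial.eq_zero_of_natDegree_lt_card_of_eval_eq_zero _ hinj hevals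
    rw [ZMod.card]
    calc (suppPoly N τ Hp * suppPoly N τ Hm).natDegree
        ≤ (suppPoly N τ Hp).natDegree + (suppPoly N τ Hm).natDegree := natDegree_mul_le
      _ ≤ τ + τ := add_le_add (suppPoly_natDegree_le N τ Hp) (suppPoly_natDegree_le N τ Hm)
      _ < N := by omega
  have hzt : ∀ j : ZMod N, ((zetaN N) ^ (-(j.val : ℤ))) ^ ((τ:ℤ)/2) ≠ 0 :=
    fun j => zpow_ne_zero _ (zpow_ne_zero _ hzne)
  rcases mul_eq_zero.mp hQ with h | h
  · right
    funext j
    have h0 := suppPoly_eval hτN Hp hHp j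
    rw [h, eval_zero] at h0
    have h1 : Hp j = 0 := by
      rcases mul_eq_zero.mp h0.symm with h' | h'
      · exact absurd h' (hzt j)
      · exact h'
    have : (G j : ℂ) = ((- F j : ℝ) : ℂ) := by
      push_cast
      rw [hHpdef] at h1
      simp only at h1
      linear_combination h1
    have := Complex.ofReal_inj.mp this
    simpa using this
  · left
    funext j
    have h0 := suppPoly_eval hτN Hm hHm j
    rw [h, eval_zero] at h0
    have h1 : Hm j = 0 := by
      rcases mul_eq_zero.mp h0.symm with h' | h'
      · exact absurd h' (hzt j)
      · exact h'
    have : (G j : ℂ) = ((F j : ℝ) : ℂ) := by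
      rw [hHmdef] at h1
      simp only at h1
      linear_combination -h1
    exact Complex.ofReal_inj.mp this
end

section
/- Let F : ℤ/N → ℝ be a nonzero real-valued vector whose DFT f is supported on {-τ/2, ..., τ/2} (mod N), with τ even. Then the sign pattern s(j) = sign(F(j)) (taking s(j) = s(j-1) when F(j) = 0, and s(0) = 1 if F(0) = 0) has at most τ sign changes, i.e., the number of indices j ∈ {1, ..., N-1} with s(j) ≠ s(j-1) is at most τ. -/
open Finset

/-- The sign pattern: `s j = sign (F j)`, with the convention `s j = s (j-1)` when
`F j = 0` and `s 0 = 1` when `F 0 = 0`. -/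
noncomputable def signPat (F : ℕ → ℝ) : ℕ → ℝ
  | 0 => if F 0 = 0 then 1 else Real.sign (F 0)
  | (j + 1) => if F (j + 1) = 0 then signPat F j else Real.sign (F (j + 1))

noncomputable def om (N : ℕ) : ℂ := Complex.exp (2 * Real.pi * Complex.I / N)

lemma om_ne (N : ℕ) : om N ≠ 0 := Complex.exp_ne_zero _

lemma om_zpow (N : ℕ) (a : ℤ) : om N ^ a = Complex.exp (2 * Real.pi * Complex.I * a / N) := by
  rw [om, ← Complex.exp_int_mul]
  ring_nf

lemma om_pow_N (N : ℕ) [NeZero N] : om N ^ (N : ℤ) = 1 := by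
  have hN : (N : ℂ) ≠ 0 := by exact_mod_cast (NeZero.ne N)
  rw [om_zpow]
  push_cast
  rw [mul_div_assoc, div_self hN, mul_one, Complex.exp_two_pi_mul_I]

lemma om_zmod (N : ℕ) [NeZero N] (a : ℤ) :
    om N ^ (((a : ZMod N)).val : ℤ) = om N ^ a := by
  have h : ((a : ZMod N).val : ℤ) = a % N := ZMod.val_intCast a
  rw [h]
  conv_rhs => rw [← Int.emod_add_mul_ediv a N]
  rw [zpow_add₀ (om_ne N), zpow_mul, om_pow_N, one_zpow, mul_one]

lemma om_eq_one_iff (N : ℕ) [NeZero N] (a : ℤ) : om N ^ a = 1 ↔ (N : ℤ) ∣ a := by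
  have hN : (N : ℂ) ≠ 0 := by exact_mod_cast (NeZero.ne N)
  have h2 : (2 * (Real.pi : ℂ) * Complex.I : ℂ) ≠ 0 := by
    simp [Real.pi_ne_zero, Complex.I_ne_zero, Complex.ofReal_ne_zero]
  rw [om_zpow, Complex.exp_eq_one_iff]
  constructor
  · rintro ⟨n, hn⟩
    refine ⟨n, ?_⟩
    rw [div_eq_iff hN] at hn
    have : (a : ℂ) = (N : ℂ) * n := by
      have h3 : (2 * (Real.pi:ℂ) * Complex.I) * a = (2 * (Real.pi:ℂ) * Complex.I) * ((N:ℂ) * n) := by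
        rw [hn]; ring
      exact mul_left_cancel₀ h2 h3
    exact_mod_cast this
  · rintro ⟨n, rfl⟩
    refine ⟨n, ?_⟩
    push_cast
    field_simp

lemma dft_eq_om (N : ℕ) [NeZero N] (F : ZMod N → ℂ) (k : ZMod N) :
    dft F k = (N : ℂ)⁻¹ * ∑ j : ZMod N, F j * om N ^ ((j.val : ℤ) * (k.val : ℤ)) := by
  unfold dft
  congr 1
  refine Finset.sum_congr rfl fun j _ => ?_
  rw [om_zpow]
  push_cast
  ring_nf

lemma sum_zmod_val (N : ℕ) [NeZero N] (f : ℕ → ℂ) :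
    ∑ k : ZMod N, f k.val = ∑ i ∈ range N, f i := by
  refine Finset.sum_bij' (fun (k : ZMod N) (_ : k ∈ univ) => k.val)
    (fun (i : ℕ) (_ : i ∈ range N) => (i : ZMod N)) ?_ ?_ ?_ ?_ ?_
  · intro k _; exact mem_range.2 k.val_lt
  · intro i _; exact mem_univ _
  · intro k _; simp [ZMod.natCast_val, ZMod.cast_id]
  · intro i hi; exact ZMod.val_cast_of_lt (mem_range.1 hi)
  · intro k _; rfl

lemma sum_om_pow (N : ℕ) [NeZero N] (a : ℤ) (ha : ¬ ((N : ℤ) ∣ a)) :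
    ∑ k : ZMod N, om N ^ (a * (k.val : ℤ)) = 0 := by
  have h1 : ∑ k : ZMod N, om N ^ (a * (k.val : ℤ)) = ∑ i ∈ range N, (om N ^ a) ^ i := by
    rw [← sum_zmod_val N (fun i => (om N ^ a) ^ i)]
    refine Finset.sum_congr rfl fun k _ => ?_
    rw [← zpow_natCast (om N ^ a), ← zpow_mul]
  rw [h1, geom_sum_eq, ← zpow_natCast (om N ^ a), ← zpow_mul, mul_comm, zpow_mul, om_pow_N,
    one_zpow, sub_self, zero_div]
  intro h
  exact ha ((om_eq_one_iff N a).1 h)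

/-- Fourier inversion. -/
lemma dft_inversion (N : ℕ) [NeZero N] (F : ZMod N → ℂ) (j : ZMod N) :
    ∑ k : ZMod N, dft F k * om N ^ (-(j.val : ℤ) * (k.val : ℤ)) = F j := by
  have hN : (N : ℂ) ≠ 0 := by exact_mod_cast (NeZero.ne N)
  have key : ∀ i k : ZMod N,
      (N:ℂ)⁻¹ * (F i * om N ^ ((i.val : ℤ) * k.val)) * om N ^ (-(j.val : ℤ) * k.val)
      = (N:ℂ)⁻¹ * (F i * om N ^ (((i.val : ℤ) - j.val) * k.val)) := by
    intro i k
    have he : (i.val : ℤ) * k.val + (-(j.val : ℤ)) * k.val = ((i.val : ℤ) - j.val) * k.val := by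
      ring
    rw [show (N:ℂ)⁻¹ * (F i * om N ^ ((i.val : ℤ) * k.val)) * om N ^ (-(j.val : ℤ) * k.val)
        = (N:ℂ)⁻¹ * (F i * (om N ^ ((i.val : ℤ) * k.val) * om N ^ (-(j.val : ℤ) * k.val))) from by
        ring, ← zpow_add₀ (om_ne N), he]
  calc ∑ k : ZMod N, dft F k * om N ^ (-(j.val : ℤ) * (k.val : ℤ))
      = ∑ k : ZMod N, ∑ i : ZMod N,
          (N:ℂ)⁻¹ * (F i * om N ^ ((i.val : ℤ) * k.val)) * om N ^ (-(j.val : ℤ) * k.val) := by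
        refine Finset.sum_congr rfl fun k _ => ?_
        rw [dft_eq_om, Finset.mul_sum, Finset.sum_mul]
    _ = ∑ i : ZMod N, ∑ k : ZMod N, (N:ℂ)⁻¹ * (F i * om N ^ (((i.val : ℤ) - j.val) * k.val)) := by
        rw [Finset.sum_comm]
        exact Finset.sum_congr rfl fun i _ => Finset.sum_congr rfl fun k _ => key i k
    _ = ∑ i : ZMod N, (N:ℂ)⁻¹ * (F i * ∑ k : ZMod N, om N ^ (((i.val : ℤ) - j.val) * k.val)) := by
        refine Finset.sum_congr rfl fun i _ => ?_
        simp only [Finset.mul_sum]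
    _ = ∑ i : ZMod N, (N:ℂ)⁻¹ * (F i * (if i = j then (N:ℂ) else 0)) := by
        refine Finset.sum_congr rfl fun i _ => ?_
        congr 2
        by_cases hij : i = j
        · subst hij
          simp only [sub_self, zero_mul, zpow_zero, if_true]
          simp [Finset.card_univ]
        · rw [if_neg hij]
          refine sum_om_pow N _ ?_
          intro hdvd
          apply hij
          have h1 : ((i.val : ℤ) : ZMod N) = ((j.val : ℤ) : ZMod N) := by
            have h0 := (ZMod.intCast_zmod_eq_zero_iff_dvd _ N).2 hdvd
            push_cast at h0 ⊢
            linear_combination (h0 : _)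
          have h2 : ((i.val : ℕ) : ZMod N) = ((j.val : ℕ) : ZMod N) := by exact_mod_cast h1
          rwa [ZMod.natCast_val, ZMod.natCast_val, ZMod.cast_id, ZMod.cast_id] at h2
    _ = F j := by
        simp_rw [mul_ite, mul_zero]
        rw [Finset.sum_ite_eq' Finset.univ j]
        simp [mul_comm, hN]


lemma om_mul_zmod (N : ℕ) [NeZero N] (c a : ℤ) :
    om N ^ (c * (((a : ZMod N)).val : ℤ)) = om N ^ (c * a) := by
  rw [mul_comm c, zpow_mul, om_zmod, ← zpow_mul, mul_comm]

lemma om_conj (N : ℕ) (a : ℤ) :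
    (starRingEnd ℂ) (om N ^ a) = om N ^ (-a) := by
  rw [om_zpow, om_zpow, ← Complex.exp_conj]
  congr 1
  push_cast
  simp only [map_div₀, map_mul, map_ofNat, Complex.conj_ofReal, Complex.conj_I,
    Complex.conj_natCast, map_intCast]
  ring

lemma dft_conj (N : ℕ) [NeZero N] (F : ZMod N → ℝ) (m : ℤ) :
    (starRingEnd ℂ) (dft (fun j => (F j : ℂ)) ((m : ZMod N)))
      = dft (fun j => (F j : ℂ)) (((-m : ℤ) : ZMod N)) := by
  rw [dft_eq_om, dft_eq_om, map_mul, map_inv₀, Complex.conj_natCast, map_sum]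
  congr 1
  refine Finset.sum_congr rfl fun j _ => ?_
  rw [map_mul, Complex.conj_ofReal, om_mul_zmod, om_mul_zmod, om_conj, ← mul_neg]

open Classical in
lemma inversion_supp (N τ d : ℕ) [NeZero N] (hd : τ = 2 * d) (hN : τ + 2 ≤ N)
    (F : ZMod N → ℂ) (hF : ∀ k, ¬ inSupp N τ k → dft F k = 0) (j : ZMod N) :
    ∑ m ∈ Finset.Icc (-(d : ℤ)) (d : ℤ),
      dft F ((m : ZMod N)) * om N ^ (-(j.val : ℤ) * m) = F j := by
  have hd2 : ((τ : ℤ)) / 2 = (d : ℤ) := by omega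
  rw [← dft_inversion N F j]
  rw [show (Finset.univ : Finset (ZMod N)) = Finset.univ from rfl]
  have h1 : ∑ k : ZMod N, dft F k * om N ^ (-(j.val : ℤ) * (k.val : ℤ))
      = ∑ k ∈ Finset.univ.filter (fun k => inSupp N τ k),
          dft F k * om N ^ (-(j.val : ℤ) * (k.val : ℤ)) := by
    symm
    refine Finset.sum_subset (Finset.filter_subset _ _) ?_
    intro k _ hk
    rw [Finset.mem_filter] at hk
    rw [hF k (fun h => hk ⟨Finset.mem_univ _, h⟩), zero_mul]
  rw [h1]
  refine Finset.sum_bij (fun (m : ℤ) (_ : m ∈ Finset.Icc (-(d:ℤ)) (d:ℤ)) => (m : ZMod N))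
    ?_ ?_ ?_ ?_
  · intro m hm
    rw [Finset.mem_Icc] at hm
    exact Finset.mem_filter.2 ⟨Finset.mem_univ _, ⟨m, by rw [hd2]; exact abs_le.2 ⟨hm.1, hm.2⟩, rfl⟩⟩
  · intro m1 h1' m2 h2' he
    rw [Finset.mem_Icc] at h1' h2'
    have := (ZMod.intCast_eq_intCast_iff' m1 m2 N).1 he
    have hdvd : (N : ℤ) ∣ m1 - m2 := Int.ModEq.dvd (Int.ModEq.symm this)
    have hb : |m1 - m2| < (N : ℤ) := by
      rw [abs_lt]
      constructor <;> [nlinarith [h1'.1, h2'.2]; nlinarith [h1'.2, h2'.1]]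
    have h0 : m1 - m2 = 0 := Int.eq_zero_of_abs_lt_dvd hdvd hb
    omega
  · intro k hk
    rcases Finset.mem_filter.1 hk with ⟨-, m, hm, rfl⟩
    exact ⟨m, Finset.mem_Icc.2 (by rw [hd2] at hm; exact ⟨(abs_le.1 hm).1, (abs_le.1 hm).2⟩), rfl⟩
  · intro m hm
    rw [om_mul_zmod]

open Classical in
lemma signPat_eq (F : ℕ → ℝ) (j : ℕ) :
    signPat F j = if h : ((Finset.range (j+1)).filter fun i => F i ≠ 0).Nonempty
      then Real.sign (F (((Finset.range (j+1)).filter fun i => F i ≠ 0).max' h)) else 1 := by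
  induction j with
  | zero =>
    by_cases h0 : F 0 = 0
    · have hempty : ¬ ((Finset.range 1).filter fun i => F i ≠ 0).Nonempty := by
        simp [Finset.filter_nonempty_iff, Finset.mem_range, Nat.lt_one_iff, h0]
      rw [dif_neg hempty]
      simp [signPat, h0]
    · have hne : ((Finset.range 1).filter fun i => F i ≠ 0).Nonempty :=
        ⟨0, Finset.mem_filter.2 ⟨Finset.mem_range.2 one_pos, h0⟩⟩
      rw [dif_pos hne, signPat, if_neg h0]
      congr 1
      have : ((Finset.range 1).filter fun i => F i ≠ 0).max' hne = 0 := by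
        have := Finset.max'_mem _ hne
        rw [Finset.mem_filter, Finset.mem_range] at this
        omega
      rw [this]
  | succ k ih =>
    by_cases h0 : F (k+1) = 0
    · have hset : ((Finset.range (k+2)).filter fun i => F i ≠ 0)
          = ((Finset.range (k+1)).filter fun i => F i ≠ 0) := by
        rw [Finset.range_add_one, Finset.filter_insert, if_neg (by simpa using h0)]
      rw [signPat, if_pos h0, ih, hset]
    · have hmem : (k+1) ∈ ((Finset.range (k+2)).filter fun i => F i ≠ 0) :=
        Finset.mem_filter.2 ⟨Finset.mem_range.2 (by omega), h0⟩
      have hne : ((Finset.range (k+2)).filter fun i => F i ≠ 0).Nonempty := ⟨_, hmem⟩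
      rw [signPat, if_neg h0, dif_pos hne]
      congr 1
      have hmax : ((Finset.range (k+2)).filter fun i => F i ≠ 0).max' hne = k+1 := by
        refine le_antisymm (Finset.max'_le _ _ _ fun y hy => ?_) (Finset.le_max' _ _ hmem)
        rw [Finset.mem_filter, Finset.mem_range] at hy
        omega
      rw [hmax]


theorem sign_changes_at_most_tau (N τ : ℕ) [NeZero N] (hτ : Even τ)
    (F : ZMod N → ℝ) (hF0 : F ≠ 0)
    (hF : ∀ k : ZMod N, ¬ inSupp N τ k → dft (fun j => (F j : ℂ)) k = 0) :
    ((Finset.Ico 1 N).filter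
      (fun j => signPat (fun n => F (n : ZMod N)) j ≠
        signPat (fun n => F (n : ZMod N)) (j - 1))).card ≤ τ := by
  classical
  set F' : ℕ → ℝ := fun n => F (n : ZMod N) with hF'def
  by_cases hNτ : N ≤ τ + 1
  · calc ((Finset.Ico 1 N).filter
        (fun j => signPat F' j ≠ signPat F' (j - 1))).card
        ≤ (Finset.Ico 1 N).card := Finset.card_filter_le _ _
      _ = N - 1 := by rw [Nat.card_Ico]
      _ ≤ τ := by omega
  push_neg at hNτ
  have hN2 : τ + 2 ≤ N := by omega
  obtain ⟨d, hd⟩ : ∃ d, τ = 2 * d := by rcases hτ with ⟨r, hr⟩; exact ⟨r, by omega⟩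
  set c : ℤ → ℂ := fun m => dft (fun j => (F j : ℂ)) ((m : ZMod N)) with hcdef
  set θ : ℕ → ℝ := fun j => 2 * Real.pi * (j : ℝ) / N with hθdef
  set g : ℝ → ℂ := fun t => ∑ m ∈ Finset.Icc (-(d:ℤ)) (d:ℤ),
    c m * Complex.exp (-((m : ℂ) * (t : ℂ)) * Complex.I) with hgdef
  set G : ℝ → ℝ := fun t => (g t).re with hGdef
  have hNpos : (0:ℝ) < N := by exact_mod_cast (NeZero.pos N)
  have hπ : 0 < Real.pi := Real.pi_pos
  -- θ facts
  have hθmono : ∀ {i j : ℕ}, i < j → θ i < θ j := by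
    intro i j hij
    have hij' : (i:ℝ) < j := by exact_mod_cast hij
    rw [hθdef]
    simp only
    rw [div_lt_div_iff₀ hNpos hNpos]
    nlinarith [mul_pos (sub_pos.2 hij') hNpos, hπ]
  have hθ0 : ∀ i : ℕ, 0 ≤ θ i := by
    intro i; rw [hθdef]; positivity
  have hθlt : ∀ {j : ℕ}, j < N → θ j < 2 * Real.pi := by
    intro j hj
    rw [hθdef, div_lt_iff₀ hNpos]
    have : (j : ℝ) < N := by exact_mod_cast hj
    nlinarith
  -- realness of g
  have hconjc : ∀ m : ℤ, (starRingEnd ℂ) (c m) = c (-m) := by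
    intro m
    rw [hcdef]
    simpa using dft_conj N F m
  have hgreal : ∀ t, ((g t).re : ℂ) = g t := by
    intro t
    rw [← Complex.conj_eq_iff_re]
    rw [hgdef]
    simp only [map_sum, map_mul]
    refine Finset.sum_bij' (fun (m : ℤ) (_ : m ∈ Finset.Icc (-(d:ℤ)) (d:ℤ)) => -m)
      (fun (m : ℤ) (_ : m ∈ Finset.Icc (-(d:ℤ)) (d:ℤ)) => -m) ?_ ?_ ?_ ?_ ?_
    · intro m hm
      show -m ∈ Finset.Icc (-(d:ℤ)) (d:ℤ)
      rw [Finset.mem_Icc] at hm ⊢; omega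
    · intro m hm
      show -m ∈ Finset.Icc (-(d:ℤ)) (d:ℤ)
      rw [Finset.mem_Icc] at hm ⊢; omega
    · intro m _; simp
    · intro m _; simp
    · intro m _
      rw [hconjc]
      congr 1
      rw [← Complex.exp_conj]
      congr 1
      simp only [map_mul, map_neg, Complex.conj_I, Complex.conj_ofReal, map_intCast]
      push_cast
      ring
  -- g at sample points
  have hgθ : ∀ j : ℕ, j < N → g (θ j) = ((F' j : ℝ) : ℂ) := by
    intro j hj
    have hinv := inversion_supp N τ d hd hN2 (fun j => (F j : ℂ)) hF ((j : ZMod N))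
    have hval : ((((j : ℕ) : ZMod N)).val : ℤ) = (j : ℤ) := by
      rw [ZMod.val_natCast_of_lt hj]
    rw [hgdef]
    have : F' j = F ((j : ZMod N)) := rfl
    rw [this, ← hinv]
    refine Finset.sum_congr rfl fun m hm => ?_
    rw [hcdef]
    congr 1
    rw [om_zpow, hval]
    congr 1
    rw [hθdef]
    push_cast
    field_simp
  have hGθ : ∀ j : ℕ, j < N → G (θ j) = F' j := by
    intro j hj
    rw [hGdef]
    simp only
    rw [hgθ j hj, Complex.ofReal_re]
  -- continuity
  have hgcont : Continuous g := by
    rw [hgdef]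
    refine continuous_finset_sum _ fun m _ => ?_
    exact continuous_const.mul (Complex.continuous_exp.comp
      (((continuous_const.mul Complex.continuous_ofReal).neg).mul continuous_const))
  have hGcont : Continuous G := Complex.continuous_re.comp hgcont
  -- the polynomial
  set P : Polynomial ℂ := ∑ m ∈ Finset.Icc (-(d:ℤ)) (d:ℤ),
      Polynomial.C (c m) * Polynomial.X ^ (m + d).toNat with hPdef
  have hPdeg : P.natDegree ≤ τ := by
    rw [hPdef]
    refine Polynomial.natDegree_sum_le_of_forall_le _ _ fun m hm => ?_
    rw [Finset.mem_Icc] at hm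
    calc (Polynomial.C (c m) * Polynomial.X ^ (m + d).toNat).natDegree
        ≤ (m + d).toNat := Polynomial.natDegree_C_mul_X_pow_le _ _
      _ ≤ τ := by omega
  have hPg : ∀ t : ℝ, Polynomial.eval (Complex.exp (-(t:ℂ) * Complex.I)) P
      = Complex.exp (-((d:ℂ) * t) * Complex.I) * g t := by
    intro t
    rw [hPdef, Polynomial.eval_finset_sum, hgdef]
    simp only
    rw [Finset.mul_sum]
    refine Finset.sum_congr rfl fun m hm => ?_
    rw [Finset.mem_Icc] at hm
    rw [Polynomial.eval_mul, Polynomial.eval_C, Polynomial.eval_pow, Polynomial.eval_X,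
      ← Complex.exp_nat_mul]
    have hnat : (((m + d).toNat : ℕ) : ℂ) = (m : ℂ) + (d : ℂ) := by
      have h1 : (((m + d).toNat : ℕ) : ℤ) = m + d := Int.toNat_of_nonneg (by omega)
      exact_mod_cast h1
    rw [hnat]
    rw [show Complex.exp (-((d:ℂ)*t)*Complex.I) * (c m * Complex.exp (-((m:ℂ) * (t:ℂ)) * Complex.I))
        = c m * (Complex.exp (-((d:ℂ)*t)*Complex.I) * Complex.exp (-((m:ℂ)*(t:ℂ)) * Complex.I))
      from by ring, ← Complex.exp_add]
    congr 1
    ring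
  -- P is nonzero
  have hPne : P ≠ 0 := by
    obtain ⟨x, hx⟩ := Function.ne_iff.1 hF0
    have hxv : F' x.val ≠ 0 := by
      have : ((x.val : ℕ) : ZMod N) = x := by simp [ZMod.natCast_val, ZMod.cast_id]
      rw [hF'def]
      simp only [this]
      simpa using hx
    intro h0
    have heval := hPg (θ x.val)
    rw [h0, Polynomial.eval_zero] at heval
    have hg0 : g (θ x.val) = 0 := by
      rcases mul_eq_zero.1 heval.symm with h|h
      · exact absurd h (Complex.exp_ne_zero _)
      · exact h
    rw [hgθ _ x.val_lt] at hg0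
    exact hxv (by exact_mod_cast hg0)
  set Δ := (Finset.Ico 1 N).filter (fun j => signPat F' j ≠ signPat F' (j-1)) with hΔdef
  have hΔmem : ∀ j ∈ Δ, 1 ≤ j ∧ j < N ∧ signPat F' j ≠ signPat F' (j-1) := by
    intro j hj
    rw [hΔdef, Finset.mem_filter, Finset.mem_Ico] at hj
    exact ⟨hj.1.1, hj.1.2, hj.2⟩
  have hΔne : ∀ j ∈ Δ, F' j ≠ 0 := by
    intro j hj
    obtain ⟨h1, h2, h3⟩ := hΔmem j hj
    obtain ⟨k, rfl⟩ : ∃ k, j = k + 1 := ⟨j - 1, by omega⟩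
    intro h0
    apply h3
    simp [signPat, h0]
  -- key existence of zeros
  have key : ∀ j : ℕ, ∃ t : ℝ, j ∈ Δ →
      (0 ≤ t ∧ t < θ j ∧ G t = 0 ∧ ∀ i, i < j → F' i ≠ 0 → θ i < t) := by
    intro j
    by_cases hj : j ∈ Δ
    swap
    · exact ⟨0, fun h => absurd h hj⟩
    obtain ⟨h1, h2, h3⟩ := hΔmem j hj
    have hFj : F' j ≠ 0 := hΔne j hj
    obtain ⟨k, rfl⟩ : ∃ k, j = k + 1 := ⟨j - 1, by omega⟩
    have hsj : signPat F' (k+1) = Real.sign (F' (k+1)) := by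
      simp [signPat, hFj]
    by_cases hS : ((Finset.range (k+1)).filter fun i => F' i ≠ 0).Nonempty
    · set p := ((Finset.range (k+1)).filter fun i => F' i ≠ 0).max' hS with hpdef
      have hpmem := Finset.max'_mem _ hS
      rw [Finset.mem_filter, Finset.mem_range] at hpmem
      have hpk : p < k + 1 := hpmem.1
      have hFp : F' p ≠ 0 := hpmem.2
      have hsk : signPat F' k = Real.sign (F' p) := by
        rw [signPat_eq, dif_pos hS]
      have hne : Real.sign (F' (k+1)) ≠ Real.sign (F' p) := by
        rw [← hsj, ← hsk]
        simpa using h3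
      have hθpj : θ p < θ (k+1) := hθmono hpk
      have hGp : G (θ p) = F' p := hGθ p (by omega)
      have hGj : G (θ (k+1)) = F' (k+1) := hGθ _ h2
      have hivt : ∃ t ∈ Set.Ioo (θ p) (θ (k+1)), G t = 0 := by
        rcases hFp.lt_or_gt with hp'|hp' <;> rcases hFj.lt_or_gt with hj'|hj'
        · exact absurd (by rw [Real.sign_of_neg hj', Real.sign_of_neg hp']) hne
        · have h0mem : (0:ℝ) ∈ Set.Ioo (G (θ p)) (G (θ (k+1))) := by
            rw [hGp, hGj]; exact ⟨hp', hj'⟩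
          obtain ⟨t, ht, htG⟩ := intermediate_value_Ioo (le_of_lt hθpj)
            hGcont.continuousOn h0mem
          exact ⟨t, ht, htG⟩
        · have h0mem : (0:ℝ) ∈ Set.Ioo (G (θ (k+1))) (G (θ p)) := by
            rw [hGp, hGj]; exact ⟨hj', hp'⟩
          obtain ⟨t, ht, htG⟩ := intermediate_value_Ioo' (le_of_lt hθpj)
            hGcont.continuousOn h0mem
          exact ⟨t, ht, htG⟩
        · exact absurd (by rw [Real.sign_of_pos hj', Real.sign_of_pos hp']) hne
      obtain ⟨t, ⟨htl, htr⟩, htG⟩ := hivt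
      refine ⟨t, fun _ => ⟨le_trans (hθ0 p) (le_of_lt htl), htr, htG, ?_⟩⟩
      intro i hik hFi
      have hip : i ≤ p := Finset.le_max' _ i
        (Finset.mem_filter.2 ⟨Finset.mem_range.2 (by omega), hFi⟩)
      rcases eq_or_lt_of_le hip with rfl|hlt'
      · exact htl
      · exact lt_trans (hθmono hlt') htl
    · have hF0' : F' 0 = 0 := by
        by_contra h
        exact hS ⟨0, Finset.mem_filter.2 ⟨Finset.mem_range.2 (by omega), h⟩⟩
      have hG0 : G 0 = 0 := by
        have h00 : θ 0 = 0 := by rw [hθdef]; simp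
        have hx : G (θ 0) = 0 := by rw [hGθ 0 (by omega), hF0']
        rwa [h00] at hx
      refine ⟨0, fun _ => ⟨le_refl 0, ?_, hG0, ?_⟩⟩
      · rw [hθdef]
        have : (0:ℝ) < ((k:ℝ) + 1) := by positivity
        have h2π : (0:ℝ) < 2 * Real.pi := by positivity
        push_cast
        positivity
      · intro i hik hFi
        exact absurd hFi (by
          have := fun hm => hS ⟨i, hm⟩
          intro h
          exact this (Finset.mem_filter.2 ⟨Finset.mem_range.2 (by omega), h⟩))
  choose tf htf using key
  -- map into roots
  have hmap : ∀ j ∈ Δ, Complex.exp (-((tf j : ℝ) : ℂ) * Complex.I) ∈ P.roots.toFinset := by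
    intro j hj
    obtain ⟨ht0, htθ, htG, -⟩ := htf j hj
    rw [Multiset.mem_toFinset, Polynomial.mem_roots hPne]
    have hgt : g (tf j) = 0 := by
      have := hgreal (tf j)
      have hre : (g (tf j)).re = 0 := htG
      rw [← this, hre, Complex.ofReal_zero]
    rw [Polynomial.IsRoot, hPg (tf j), hgt, mul_zero]
  -- injectivity
  have hmain : ∀ j1 ∈ Δ, ∀ j2 ∈ Δ, j1 < j2 → tf j1 < tf j2 := by
    intro j1 hj1 j2 hj2 hlt
    obtain ⟨-, ht1θ, -, -⟩ := htf j1 hj1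
    obtain ⟨-, -, -, ht2sep⟩ := htf j2 hj2
    exact lt_trans ht1θ (ht2sep j1 hlt (hΔne j1 hj1))
  have main2 : ∀ a ∈ Δ, ∀ b ∈ Δ, a < b →
      Complex.exp (-((tf a : ℝ) : ℂ) * Complex.I) ≠ Complex.exp (-((tf b : ℝ) : ℂ) * Complex.I) := by
    intro a ha b hb hab heq
    have h1 := hmain a ha b hb hab
    obtain ⟨ha0, haθ, -, -⟩ := htf a ha
    obtain ⟨hb0, hbθ, -, -⟩ := htf b hb
    have hb2π : tf b < 2 * Real.pi := lt_trans hbθ (hθlt (hΔmem b hb).2.1)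
    rw [Complex.exp_eq_exp_iff_exists_int] at heq
    obtain ⟨n, hn⟩ := heq
    have him : -(tf a) = -(tf b) + (n : ℝ) * (2 * Real.pi) := by
      have h2 := congrArg Complex.im hn
      simpa [Complex.add_im, Complex.mul_im, Complex.mul_re] using h2
    have hnr : (n : ℝ) * (2 * Real.pi) = tf b - tf a := by linarith
    have hpos : 0 < (n : ℝ) * (2 * Real.pi) := by
      rw [hnr]; linarith
    have hlt2π : (n : ℝ) * (2 * Real.pi) < 2 * Real.pi := by
      rw [hnr]; linarith
    have hn0 : (0:ℝ) < (n:ℝ) := by nlinarith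
    have hn1 : (1:ℤ) ≤ n := by exact_mod_cast (by exact_mod_cast hn0 : (0:ℤ) < n)
    have : (1:ℝ) ≤ (n:ℝ) := by exact_mod_cast hn1
    nlinarith
  have hinj : Set.InjOn (fun j => Complex.exp (-((tf j : ℝ) : ℂ) * Complex.I)) ↑Δ := by
    intro j1 hj1 j2 hj2 he
    by_contra hne
    rcases lt_or_gt_of_ne hne with h|h
    · exact main2 j1 hj1 j2 hj2 h he
    · exact main2 j2 hj2 j1 hj1 h he.symm
  calc Δ.card ≤ P.roots.toFinset.card :=
        Finset.card_le_card_of_injOn _ hmap hinj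
    _ ≤ Multiset.card P.roots := Multiset.toFinset_card_le _
    _ ≤ P.natDegree := Polynomial.card_roots' P
    _ ≤ τ := hPdeg
end

section
/- Let F : ℤ/N → ℝ be real-valued with DFT f supported on {-τ/2, ..., τ/2} (mod N), τ even, and let F_j = F(j) for j = 0, ..., N-1. Then for every j, |F_j - F_{j-1}| ≤ (2/N)^{3/2} · π · √(τ(τ+1)(τ+2)/24) · ‖F‖, where ‖F‖² = ∑_{j=0}^{N-1} F_j² and indices are taken mod N. -/
open Finset Real

namespace CDB
variable (N : ℕ) [NeZero N]

noncomputable def w : ℂ := Complex.exp (2 * Real.pi * Complex.I / N)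

omit [NeZero N] in
lemma w_ne_zero : w N ≠ 0 := Complex.exp_ne_zero _

omit [NeZero N] in
lemma w_pow (a : ℤ) : w N ^ a = Complex.exp (2 * Real.pi * Complex.I * a / N) := by
  rw [w, ← Complex.exp_int_mul]; ring_nf

omit [NeZero N] in
lemma w_norm (a : ℤ) : ‖w N ^ a‖ = 1 := by
  rw [w_pow]
  rw [show 2 * (Real.pi : ℂ) * Complex.I * a / N = ((2 * Real.pi * a / N : ℝ) : ℂ) * Complex.I
    from by push_cast; ring]
  exact Complex.norm_exp_ofReal_mul_I _

lemma w_zpow_eq_one_iff (a : ℤ) : w N ^ a = 1 ↔ (a : ZMod N) = 0 := by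
  rw [w_pow, Complex.exp_eq_one_iff, ZMod.intCast_zmod_eq_zero_iff_dvd]
  have hN : (N : ℂ) ≠ 0 := Nat.cast_ne_zero.mpr (NeZero.ne N)
  have hπ : (Real.pi : ℂ) ≠ 0 := by exact_mod_cast Real.pi_ne_zero
  have h2 : (2:ℂ) * Real.pi * Complex.I ≠ 0 := by simp [Complex.I_ne_zero, hπ]
  constructor
  · rintro ⟨n, hn⟩
    have : (a : ℂ) = N * n := by
      apply mul_left_cancel₀ h2
      field_simp at hn
      linear_combination (2 * (Real.pi:ℂ) * Complex.I) * hn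
    exact ⟨n, by exact_mod_cast this⟩
  · rintro ⟨n, hn⟩
    exact ⟨n, by rw [hn]; push_cast; field_simp⟩

lemma w_zpow_congr {a b : ℤ} (h : (a : ZMod N) = b) : w N ^ a = w N ^ b := by
  have h1 : w N ^ (a - b) = 1 := by
    rw [w_zpow_eq_one_iff]; push_cast; rw [h]; ring
  calc w N ^ a = w N ^ (b + (a - b)) := by ring_nf
    _ = w N ^ b * w N ^ (a - b) := zpow_add₀ (w_ne_zero N) _ _
    _ = w N ^ b := by rw [h1, mul_one]

lemma sum_val (g : ℕ → ℂ) : ∑ j : ZMod N, g j.val = ∑ i ∈ Finset.range N, g i := by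
  exact Finset.sum_nbij' (fun j => j.val) (fun i => (i : ZMod N))
    (fun a _ => Finset.mem_range.mpr (ZMod.val_lt a))
    (fun a _ => Finset.mem_univ _)
    (fun a _ => ZMod.natCast_zmod_val a)
    (fun a ha => ZMod.val_cast_of_lt (Finset.mem_range.mp ha))
    (fun a _ => rfl)

lemma orth (a : ℤ) :
    ∑ k : ZMod N, w N ^ (a * (k.val : ℤ)) = if (a : ZMod N) = 0 then (N : ℂ) else 0 := by
  have : ∀ k : ZMod N, w N ^ (a * (k.val : ℤ)) = (w N ^ a) ^ (k.val : ℕ) := by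
    intro k; rw [zpow_mul]; norm_cast
  simp_rw [this]
  rw [sum_val N (fun i => (w N ^ a) ^ i)]
  by_cases h : (a : ZMod N) = 0
  · have : w N ^ a = 1 := (w_zpow_eq_one_iff N a).mpr h
    simp [this, h]
  · have h1 : w N ^ a ≠ 1 := fun hc => h ((w_zpow_eq_one_iff N a).mp hc)
    rw [if_neg h, geom_sum_eq h1]
    have hN : (w N ^ a) ^ N = 1 := by
      rw [← zpow_natCast, ← zpow_mul, mul_comm, zpow_mul]
      rw [show ((N:ℤ)) = ((N:ℕ):ℤ) from rfl]
      have : w N ^ ((N:ℕ):ℤ) = 1 := by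
        rw [w_zpow_eq_one_iff]; simp
      rw [this, one_zpow]
    rw [hN, sub_self, zero_div]

omit [NeZero N] in
lemma w_conj (a : ℤ) : (starRingEnd ℂ) (w N ^ a) = w N ^ (-a) := by
  rw [w_pow, w_pow, ← Complex.exp_conj]
  congr 1
  simp [map_div₀, Complex.conj_ofNat]

lemma dft_eq (Φ : ZMod N → ℂ) (k : ZMod N) :
    dft Φ k = (N : ℂ)⁻¹ * ∑ j : ZMod N, Φ j * w N ^ ((j.val : ℤ) * (k.val : ℤ)) := by
  unfold dft
  congr 1
  apply Finset.sum_congr rfl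
  intro j _
  rw [w_pow]
  congr 2
  push_cast
  ring

lemma val_diff_cast (a b : ZMod N) :
    (((a.val : ℤ) - (b.val : ℤ) : ℤ) : ZMod N) = a - b := by
  push_cast
  rw [ZMod.natCast_zmod_val, ZMod.natCast_zmod_val]

lemma inversion (Φ : ZMod N → ℂ) (j : ZMod N) :
    ∑ k : ZMod N, dft Φ k * w N ^ (-((j.val : ℤ) * (k.val : ℤ))) = Φ j := by
  have key : ∀ k : ZMod N, dft Φ k * w N ^ (-((j.val : ℤ) * (k.val : ℤ)))
      = (N : ℂ)⁻¹ * ∑ j' : ZMod N,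
          Φ j' * w N ^ (((j'.val : ℤ) - (j.val : ℤ)) * (k.val : ℤ)) := by
    intro k
    rw [dft_eq, mul_assoc, Finset.sum_mul]
    congr 1
    apply Finset.sum_congr rfl
    intro j' _
    rw [mul_assoc, ← zpow_add₀ (w_ne_zero N)]
    congr 2
    ring
  simp_rw [key, ← Finset.mul_sum]
  rw [Finset.sum_comm]
  have horth : ∀ j' : ZMod N,
      ∑ k : ZMod N, Φ j' * w N ^ (((j'.val : ℤ) - (j.val : ℤ)) * (k.val : ℤ))
      = Φ j' * (if j' = j then (N : ℂ) else 0) := by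
    intro j'
    rw [← Finset.mul_sum, orth]
    congr 1
    rw [val_diff_cast]
    simp [sub_eq_zero]
  simp_rw [horth, mul_ite, mul_zero]
  rw [Finset.sum_ite_eq' Finset.univ j (fun j' => Φ j' * N)]
  simp
  rw [mul_comm, mul_assoc, mul_inv_cancel₀ (Nat.cast_ne_zero.mpr (NeZero.ne N)), mul_one]

lemma parseval (Φ : ZMod N → ℂ) :
    ∑ k : ZMod N, Complex.normSq (dft Φ k) = (N : ℝ)⁻¹ * ∑ j : ZMod N, Complex.normSq (Φ j) := by
  have hN : (N : ℂ) ≠ 0 := Nat.cast_ne_zero.mpr (NeZero.ne N)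
  have key : ∑ k : ZMod N, ((Complex.normSq (dft Φ k) : ℂ))
      = (N : ℂ)⁻¹ * ∑ j : ZMod N, ((Complex.normSq (Φ j) : ℂ)) := by
    simp_rw [← Complex.mul_conj]
    have expand : ∀ k : ZMod N, dft Φ k * (starRingEnd ℂ) (dft Φ k)
        = (N : ℂ)⁻¹ * (N : ℂ)⁻¹ * ∑ a : ZMod N, ∑ b : ZMod N,
            Φ a * (starRingEnd ℂ) (Φ b) * w N ^ (((a.val : ℤ) - (b.val : ℤ)) * (k.val : ℤ)) := by
      intro k
      rw [dft_eq]
      rw [map_mul, map_sum]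
      simp_rw [map_mul, w_conj]
      rw [map_inv₀, Complex.conj_natCast]
      rw [show ((N:ℂ)⁻¹ * ∑ j : ZMod N, Φ j * w N ^ ((j.val : ℤ) * (k.val:ℤ))) *
          ((N:ℂ)⁻¹ * ∑ j : ZMod N, (starRingEnd ℂ) (Φ j) * w N ^ (-((j.val : ℤ) * (k.val:ℤ))))
        = (N : ℂ)⁻¹ * (N : ℂ)⁻¹ * ((∑ j : ZMod N, Φ j * w N ^ ((j.val : ℤ) * (k.val:ℤ))) *
          (∑ j : ZMod N, (starRingEnd ℂ) (Φ j) * w N ^ (-((j.val : ℤ) * (k.val:ℤ))))) from by ring]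
      congr 1
      rw [Finset.sum_mul_sum]
      apply Finset.sum_congr rfl; intro a _
      apply Finset.sum_congr rfl; intro b _
      rw [show Φ a * w N ^ ((a.val : ℤ) * (k.val:ℤ)) * ((starRingEnd ℂ) (Φ b) * w N ^ (-((b.val : ℤ) * (k.val:ℤ))))
        = Φ a * (starRingEnd ℂ) (Φ b) * (w N ^ ((a.val : ℤ) * (k.val:ℤ)) * w N ^ (-((b.val : ℤ) * (k.val:ℤ)))) from by ring]
      rw [← zpow_add₀ (w_ne_zero N)]
      congr 2
      ring
    simp_rw [expand, ← Finset.mul_sum]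
    rw [Finset.sum_comm]
    have inner : ∀ a : ZMod N, ∑ k : ZMod N, ∑ b : ZMod N,
        Φ a * (starRingEnd ℂ) (Φ b) * w N ^ (((a.val : ℤ) - (b.val : ℤ)) * (k.val : ℤ))
        = (N : ℂ) * (Φ a * (starRingEnd ℂ) (Φ a)) := by
      intro a
      rw [Finset.sum_comm]
      have hb : ∀ b : ZMod N, ∑ k : ZMod N,
          Φ a * (starRingEnd ℂ) (Φ b) * w N ^ (((a.val : ℤ) - (b.val : ℤ)) * (k.val : ℤ))
          = Φ a * (starRingEnd ℂ) (Φ b) * (if b = a then (N:ℂ) else 0) := by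
        intro b
        rw [← Finset.mul_sum, orth]
        congr 1
        rw [val_diff_cast]
        simp [sub_eq_zero, eq_comm]
      simp_rw [hb, mul_ite, mul_zero]
      rw [Finset.sum_ite_eq' Finset.univ a (fun b => Φ a * (starRingEnd ℂ) (Φ b) * N)]
      rw [if_pos (Finset.mem_univ a)]
      ring
    simp_rw [inner, Complex.mul_conj, ← Finset.mul_sum]
    rw [show (N:ℂ)⁻¹ * (N:ℂ)⁻¹ * ((N:ℂ) * ∑ a : ZMod N, ((Complex.normSq (Φ a) : ℂ)))
      = ((N:ℂ)⁻¹ * ((N:ℂ)⁻¹ * (N:ℂ))) * ∑ a : ZMod N, ((Complex.normSq (Φ a) : ℂ)) from by ring]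
    rw [inv_mul_cancel₀ hN, mul_one]
  have := key
  rw [← Complex.ofReal_sum, ← Complex.ofReal_sum] at this
  rw [show ((N:ℂ))⁻¹ = ((((N:ℝ))⁻¹ : ℝ) : ℂ) from by push_cast; ring] at this
  rw [← Complex.ofReal_mul] at this
  exact_mod_cast this

lemma dft_shift (Φ : ZMod N → ℂ) (k : ZMod N) :
    dft (fun i => Φ (i - 1)) k = w N ^ ((k.val : ℤ)) * dft Φ k := by
  have step : ∑ j : ZMod N, Φ (j - 1) * w N ^ ((j.val:ℤ) * (k.val:ℤ))
      = ∑ j : ZMod N, Φ j * (w N ^ ((j.val:ℤ) * (k.val:ℤ)) * w N ^ ((k.val:ℤ))) := by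
    rw [← Equiv.sum_comp (Equiv.addRight (1 : ZMod N))
      (fun j => Φ (j - 1) * w N ^ ((j.val:ℤ) * (k.val:ℤ)))]
    apply Finset.sum_congr rfl
    intro j _
    simp only [Equiv.coe_addRight, add_sub_cancel_right]
    congr 1
    rw [← zpow_add₀ (w_ne_zero N)]
    apply w_zpow_congr
    push_cast
    simp only [ZMod.natCast_zmod_val]
    ring
  rw [dft_eq, dft_eq, step, Finset.mul_sum, Finset.mul_sum, Finset.mul_sum]
  apply Finset.sum_congr rfl
  intro j _
  ring

end CDB

lemma exp_I_sub_one_norm_le (θ : ℝ) : ‖Complex.exp (θ * Complex.I) - 1‖ ≤ |θ| := by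
  have h1 : ‖Complex.exp (θ * Complex.I) - 1‖ ^ 2 = 2 - 2 * Real.cos θ := by
    rw [Complex.sq_norm]
    rw [Complex.exp_mul_I]
    have : (Complex.cos θ + Complex.sin θ * Complex.I - 1)
        = Complex.mk (Real.cos θ - 1) (Real.sin θ) := by
      apply Complex.ext <;> simp [Complex.cos_ofReal_re, Complex.sin_ofReal_re]
    rw [this, Complex.normSq_mk]
    nlinarith [Real.sin_sq_add_cos_sq θ]
  have hs := Real.sin_sq_eq_half_sub (θ/2)
  rw [show 2 * (θ/2) = θ from by ring] at hs
  have habs : |Real.sin (θ/2)| ≤ |θ/2| := Real.abs_sin_le_abs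
  have h4 : Real.sin (θ/2) ^ 2 ≤ (θ/2) ^ 2 := by
    rw [← sq_abs, ← sq_abs (θ/2)]
    exact pow_le_pow_left₀ (abs_nonneg _) habs 2
  have h3 : ‖Complex.exp (θ * Complex.I) - 1‖ ^ 2 ≤ |θ| ^ 2 := by
    rw [h1, sq_abs]; nlinarith
  nlinarith [norm_nonneg (Complex.exp (θ * Complex.I) - 1), abs_nonneg θ]

lemma sq_sum_Icc (t : ℕ) :
    ∑ m ∈ Finset.Icc (-(t:ℤ)) (t:ℤ), ((m:ℝ))^2 = ((t:ℝ)*(t+1)*(2*t+1))/3 := by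
  induction t with
  | zero => simp
  | succ n ih =>
    have hset : Finset.Icc (-((n:ℤ)+1)) ((n:ℤ)+1)
        = insert (-((n:ℤ)+1)) (insert ((n:ℤ)+1) (Finset.Icc (-(n:ℤ)) (n:ℤ))) := by
      ext x
      simp only [Finset.mem_Icc, Finset.mem_insert]
      omega
    push_cast
    rw [hset, Finset.sum_insert, Finset.sum_insert]
    · rw [ih]; push_cast; ring
    · simp only [Finset.mem_Icc]; omega
    · simp only [Finset.mem_insert, Finset.mem_Icc]; omega

theorem consecutive_difference_bound (N τ : ℕ) [NeZero N] (hτ : Even τ)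
    (F : ZMod N → ℝ)
    (hF : ∀ k : ZMod N, ¬ inSupp N τ k → dft (fun j => (F j : ℂ)) k = 0) :
    ∀ j : ZMod N, |F j - F (j - 1)| ≤
      (2 / N : ℝ) ^ ((3 : ℝ) / 2) * π *
        Real.sqrt ((τ * (τ + 1) * (τ + 2) : ℝ) / 24) *
        Real.sqrt (∑ i : ZMod N, F i ^ 2) := by
  intro j
  classical
  have hNr : (0:ℝ) < N := Nat.cast_pos.mpr (Nat.pos_of_ne_zero (NeZero.ne N))
  obtain ⟨t, ht⟩ := hτ
  set Φ : ZMod N → ℂ := fun i => ((F i : ℝ) : ℂ) with hΦdef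
  set Ψ : ZMod N → ℂ := fun i => ((F i - F (i - 1) : ℝ) : ℂ) with hΨdef
  have hΨdft : ∀ k : ZMod N, dft Ψ k = (1 - CDB.w N ^ ((k.val:ℤ))) * dft Φ k := by
    intro k
    have hsub : dft Ψ k = dft Φ k - dft (fun i => Φ (i - 1)) k := by
      unfold dft
      rw [← mul_sub, ← Finset.sum_sub_distrib]
      congr 1
      apply Finset.sum_congr rfl
      intro i _
      simp only [hΨdef, hΦdef, Complex.ofReal_sub]
      ring
    rw [hsub, CDB.dft_shift]
    ring
  set S : Finset (ZMod N) := Finset.univ.filter (fun k => inSupp N τ k) with hS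
  have hzero : ∀ k : ZMod N, k ∉ S → dft Ψ k * CDB.w N ^ (-((j.val:ℤ) * (k.val:ℤ))) = 0 := by
    intro k hk
    have hns : ¬ inSupp N τ k := by
      intro hc
      exact hk (Finset.mem_filter.mpr ⟨Finset.mem_univ k, hc⟩)
    rw [hΨdft, hF k hns, mul_zero, zero_mul]
  have hrepr : Ψ j = ∑ k ∈ S, dft Ψ k * CDB.w N ^ (-((j.val:ℤ) * (k.val:ℤ))) := by
    rw [← CDB.inversion N Ψ j]
    exact (Finset.sum_subset (Finset.subset_univ S) (fun k _ hk => hzero k hk)).symm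
  have step1 : ‖Ψ j‖ ≤ ∑ k ∈ S, ‖1 - CDB.w N ^ ((k.val:ℤ))‖ * ‖dft Φ k‖ := by
    rw [hrepr]
    refine le_trans (norm_sum_le _ _) ?_
    apply Finset.sum_le_sum
    intro k _
    rw [norm_mul, CDB.w_norm, mul_one, hΨdft, norm_mul]
  have CS : (∑ k ∈ S, ‖1 - CDB.w N ^ ((k.val:ℤ))‖ * ‖dft Φ k‖)
      ≤ Real.sqrt (∑ k ∈ S, ‖1 - CDB.w N ^ ((k.val:ℤ))‖^2) *
        Real.sqrt (∑ k ∈ S, ‖dft Φ k‖^2) := by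
    have h := Finset.sum_mul_sq_le_sq_mul_sq S (fun k => ‖1 - CDB.w N ^ ((k.val:ℤ))‖)
      (fun k => ‖dft Φ k‖)
    have hnn : 0 ≤ ∑ k ∈ S, ‖1 - CDB.w N ^ ((k.val:ℤ))‖ * ‖dft Φ k‖ :=
      Finset.sum_nonneg fun k _ => mul_nonneg (norm_nonneg _) (norm_nonneg _)
    calc ∑ k ∈ S, ‖1 - CDB.w N ^ ((k.val:ℤ))‖ * ‖dft Φ k‖
        = Real.sqrt ((∑ k ∈ S, ‖1 - CDB.w N ^ ((k.val:ℤ))‖ * ‖dft Φ k‖)^2) :=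
          (Real.sqrt_sq hnn).symm
      _ ≤ Real.sqrt ((∑ k ∈ S, ‖1 - CDB.w N ^ ((k.val:ℤ))‖^2) * (∑ k ∈ S, ‖dft Φ k‖^2)) :=
          Real.sqrt_le_sqrt h
      _ = _ := Real.sqrt_mul (Finset.sum_nonneg fun k _ => sq_nonneg _) _
  -- bound on Fourier mass
  have hA : (∑ k ∈ S, ‖dft Φ k‖^2) ≤ (N:ℝ)⁻¹ * ∑ i : ZMod N, F i ^ 2 := by
    have h1 : (∑ k ∈ S, ‖dft Φ k‖^2) ≤ ∑ k : ZMod N, ‖dft Φ k‖^2 :=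
      Finset.sum_le_sum_of_subset_of_nonneg (Finset.subset_univ S) (fun k _ _ => sq_nonneg _)
    have h2 : ∑ k : ZMod N, ‖dft Φ k‖^2 = (N:ℝ)⁻¹ * ∑ i : ZMod N, F i ^ 2 := by
      have hp := CDB.parseval N Φ
      have e1 : ∀ k : ZMod N, ‖dft Φ k‖^2 = Complex.normSq (dft Φ k) := by
        intro k; exact Complex.sq_norm _
      have e2 : ∀ i : ZMod N, Complex.normSq (Φ i) = F i ^ 2 := by
        intro i
        simp only [hΦdef, Complex.normSq_ofReal]
        ring
      simp_rw [e1, hp, e2]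
    rw [← h2]; exact h1
  -- bound on multiplier
  set mfun : ZMod N → ℤ := fun k => if h : inSupp N τ k then h.choose else 0 with hmfun
  have hm : ∀ k ∈ S, |mfun k| ≤ (τ:ℤ)/2 ∧ ((mfun k : ZMod N) = k) := by
    intro k hk
    have hk' : inSupp N τ k := (Finset.mem_filter.mp hk).2
    simp only [hmfun, dif_pos hk']
    exact hk'.choose_spec
  have hBk : ∀ k ∈ S, ‖1 - CDB.w N ^ ((k.val:ℤ))‖^2 ≤ (2*π/N)^2 * ((mfun k : ℝ))^2 := by
    intro k hk
    have hcast : ((k.val : ℤ) : ZMod N) = ((mfun k : ℤ) : ZMod N) := by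
      rw [(hm k hk).2]
      push_cast
      rw [ZMod.natCast_zmod_val]
    rw [CDB.w_zpow_congr N hcast]
    have hnorm : ‖1 - CDB.w N ^ (mfun k)‖
        = ‖Complex.exp (((2*π*(mfun k)/N : ℝ)) * Complex.I) - 1‖ := by
      rw [norm_sub_rev]
      congr 2
      rw [CDB.w_pow]
      congr 1
      push_cast
      ring
    have hle := exp_I_sub_one_norm_le (2*π*(mfun k)/N)
    rw [← hnorm] at hle
    have hsq : ‖1 - CDB.w N ^ (mfun k)‖^2 ≤ (2*π*(mfun k:ℝ)/N)^2 := by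
      have := norm_nonneg (1 - CDB.w N ^ (mfun k))
      nlinarith [sq_abs (2*π*(mfun k:ℝ)/N)]
    calc ‖1 - CDB.w N ^ (mfun k)‖^2 ≤ (2*π*(mfun k:ℝ)/N)^2 := hsq
      _ = (2*π/N)^2 * ((mfun k : ℝ))^2 := by ring
  have htZ : (τ:ℤ)/2 = (t:ℤ) := by
    have : (τ:ℤ) = t + t := by exact_mod_cast congrArg (Nat.cast : ℕ → ℤ) ht
    omega
  have hB : (∑ k ∈ S, ‖1 - CDB.w N ^ ((k.val:ℤ))‖^2)
      ≤ (2*π/N)^2 * (((t:ℝ)*(t+1)*(2*t+1))/3) := by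
    have hsum : ∑ k ∈ S, ((mfun k:ℝ))^2 ≤ ((t:ℝ)*(t+1)*(2*t+1))/3 := by
      have hinj : ∀ a ∈ S, ∀ b ∈ S, mfun a = mfun b → a = b := by
        intro a ha b hb hab
        rw [← (hm a ha).2, hab, (hm b hb).2]
      have himg : ∑ k ∈ S, ((mfun k:ℝ))^2 = ∑ x ∈ S.image mfun, ((x:ℝ))^2 :=
        (Finset.sum_image (f := fun x : ℤ => ((x:ℝ))^2) (g := mfun) hinj).symm
      rw [himg, ← sq_sum_Icc t]
      apply Finset.sum_le_sum_of_subset_of_nonneg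
      · intro x hx
        obtain ⟨k, hk, hkx⟩ := Finset.mem_image.mp hx
        have := (hm k hk).1
        rw [hkx, htZ] at this
        rw [abs_le] at this
        rw [Finset.mem_Icc]
        omega
      · intro x _ _
        exact sq_nonneg _
    calc (∑ k ∈ S, ‖1 - CDB.w N ^ ((k.val:ℤ))‖^2)
        ≤ ∑ k ∈ S, (2*π/N)^2 * ((mfun k : ℝ))^2 := Finset.sum_le_sum hBk
      _ = (2*π/N)^2 * ∑ k ∈ S, ((mfun k : ℝ))^2 := by rw [Finset.mul_sum]
      _ ≤ (2*π/N)^2 * (((t:ℝ)*(t+1)*(2*t+1))/3) := by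
          apply mul_le_mul_of_nonneg_left hsum (sq_nonneg _)
  -- combine
  have habs : |F j - F (j - 1)| = ‖Ψ j‖ := by
    simp only [hΨdef, Complex.norm_real, Real.norm_eq_abs]
  have hmono : Real.sqrt (∑ k ∈ S, ‖1 - CDB.w N ^ ((k.val:ℤ))‖^2) *
        Real.sqrt (∑ k ∈ S, ‖dft Φ k‖^2)
      ≤ Real.sqrt ((2*π/N)^2 * (((t:ℝ)*(t+1)*(2*t+1))/3)) *
        Real.sqrt ((N:ℝ)⁻¹ * ∑ i : ZMod N, F i ^ 2) := by
    apply mul_le_mul (Real.sqrt_le_sqrt hB) (Real.sqrt_le_sqrt hA)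
      (Real.sqrt_nonneg _) (Real.sqrt_nonneg _)
  have hfinal : Real.sqrt ((2*π/N)^2 * (((t:ℝ)*(t+1)*(2*t+1))/3)) *
        Real.sqrt ((N:ℝ)⁻¹ * ∑ i : ZMod N, F i ^ 2)
      = (2 / N : ℝ) ^ ((3 : ℝ) / 2) * π *
        Real.sqrt ((τ * (τ + 1) * (τ + 2) : ℝ) / 24) *
        Real.sqrt (∑ i : ZMod N, F i ^ 2) := by
    have hSig : (0:ℝ) ≤ ∑ i : ZMod N, F i ^ 2 := Finset.sum_nonneg fun i _ => sq_nonneg _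
    have hτt : (τ:ℝ) = 2*t := by
      rw [ht]; push_cast; ring
    have hL : Real.sqrt ((2*π/N)^2 * (((t:ℝ)*(t+1)*(2*t+1))/3)) *
          Real.sqrt ((N:ℝ)⁻¹ * ∑ i : ZMod N, F i ^ 2)
        = Real.sqrt (((2*π/N)^2 * (((t:ℝ)*(t+1)*(2*t+1))/3)) *
            ((N:ℝ)⁻¹ * ∑ i : ZMod N, F i ^ 2)) :=
      (Real.sqrt_mul (by positivity) _).symm
    have hrpow : (2 / N : ℝ) ^ ((3 : ℝ) / 2) = Real.sqrt ((2/N:ℝ)^3) := by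
      rw [show ((3:ℝ)/2) = ((3:ℕ):ℝ) * (1/2:ℝ) from by norm_num]
      rw [Real.rpow_mul (by positivity), Real.rpow_natCast, ← Real.sqrt_eq_rpow]
    have hR : Real.sqrt ((2/N:ℝ)^3 * (π^2 * (((τ * (τ + 1) * (τ + 2) : ℝ) / 24) *
            (∑ i : ZMod N, F i ^ 2))))
        = (2 / N : ℝ) ^ ((3 : ℝ) / 2) * π *
          Real.sqrt ((τ * (τ + 1) * (τ + 2) : ℝ) / 24) *
          Real.sqrt (∑ i : ZMod N, F i ^ 2) := by
      rw [Real.sqrt_mul (by positivity), Real.sqrt_mul (sq_nonneg π),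
        Real.sqrt_mul (by positivity : (0:ℝ) ≤ (τ * (τ + 1) * (τ + 2) : ℝ) / 24),
        Real.sqrt_sq Real.pi_nonneg, hrpow]
      ring
    rw [hL, ← hR]
    congr 1
    rw [hτt]
    field_simp
    ring
  calc |F j - F (j - 1)| = ‖Ψ j‖ := habs
    _ ≤ ∑ k ∈ S, ‖1 - CDB.w N ^ ((k.val:ℤ))‖ * ‖dft Φ k‖ := step1
    _ ≤ Real.sqrt (∑ k ∈ S, ‖1 - CDB.w N ^ ((k.val:ℤ))‖^2) *
        Real.sqrt (∑ k ∈ S, ‖dft Φ k‖^2) := CS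
    _ ≤ Real.sqrt ((2*π/N)^2 * (((t:ℝ)*(t+1)*(2*t+1))/3)) *
        Real.sqrt ((N:ℝ)⁻¹ * ∑ i : ZMod N, F i ^ 2) := hmono
    _ = _ := hfinal
end
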